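/- Let (vᵢ)_{i ∈ ℤ} be a bi-infinite path in the Farey graph 𝓕 (so vᵢ is adjacent to vᵢ₊₁ and vᵢ₋₁ ≠ vᵢ₊₁ for all i). Suppose that for every i ∈ ℤ, the distance between vᵢ₋₁ and vᵢ₊₁ in the induced subgraph of 𝓕 on the neighborhood of vᵢ is at least 4. Then for all i < j, the only path in 𝓕 of length j − i from vᵢ to vⱼ is the path vᵢ, vᵢ₊₁, …, vⱼ; that is, (vᵢ) is the unique geodesic through any two of its vertices. -/

import Mathlib

/-- Primitive vectors in `ℤ²`. -/
def PrimVec : Type := {v : Fin 2 → ℤ // IsCoprime (v 0) (v 1)}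

/-- Identify a primitive vector with its negation. -/
def fareySetoid : Setoid PrimVec where
  r v w := v.1 = w.1 ∨ v.1 = -w.1
  iseqv := by
    refine ⟨fun v => Or.inl rfl, ?_, ?_⟩
    · rintro v w (h | h)
      · exact Or.inl h.symm
      · exact Or.inr (by rw [h, neg_neg])
    · rintro u v w (h1 | h1) (h2 | h2)
      · exact Or.inl (h1.trans h2)
      · exact Or.inr (by rw [h1, h2])
      · exact Or.inr (by rw [h1, h2])
      · exact Or.inl (by rw [h1, h2, neg_neg])

/-- Vertices of the Farey graph: primitive vectors of `ℤ²` modulo negation. -/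
def FareyVertex : Type := Quotient fareySetoid

def fareyDet (v w : Fin 2 → ℤ) : ℤ := v 0 * w 1 - v 1 * w 0

lemma fareyDet_neg_left (v w : Fin 2 → ℤ) : fareyDet (-v) w = -fareyDet v w := by
  simp [fareyDet]; ring

lemma fareyDet_neg_right (v w : Fin 2 → ℤ) : fareyDet v (-w) = -fareyDet v w := by
  simp [fareyDet]; ring

/-- The Farey graph. -/
def Farey : SimpleGraph FareyVertex where
  Adj := Quotient.lift₂
    (fun v w : PrimVec => fareyDet v.1 w.1 = 1 ∨ fareyDet v.1 w.1 = -1)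
    (by
      rintro a b a' b' (h1 | h1) (h2 | h2) <;>
        simp only [eq_iff_iff] <;>
        rw [h1, h2] <;>
        simp only [fareyDet_neg_left, fareyDet_neg_right, neg_neg] <;>
        omega)
  symm := by
    constructor
    intro a b
    refine Quotient.inductionOn₂ a b ?_
    intro v w h
    have hd : fareyDet w.1 v.1 = -fareyDet v.1 w.1 := by simp [fareyDet]; ring
    show fareyDet w.1 v.1 = 1 ∨ fareyDet w.1 v.1 = -1
    rcases h with h | h <;> omega
  loopless := by
    constructor
    intro a
    refine Quotient.inductionOn a ?_
    intro v h
    have hd : fareyDet v.1 v.1 = 0 := by simp [fareyDet]; ring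
    rcases (h : fareyDet v.1 v.1 = 1 ∨ fareyDet v.1 v.1 = -1) with h | h <;> omega

/-- The Farey vertex of a primitive vector. -/
def fv (v : Fin 2 → ℤ) (h : IsCoprime (v 0) (v 1)) : FareyVertex :=
  Quotient.mk fareySetoid ⟨v, h⟩


/-!
At each vertex `v k` let `w k` be the vertex two steps from `v (k - 1)` along the link of `v k`
(the bi-infinite path of neighbours of `v k`), in the direction of `v (k + 1)`. Because the turn
at `v k` is at least four, the edge `{v k, w k}` separates the vertices `v m` with `m < k` from
those with `m > k` (Farey edges do not cross), and `w k` is adjacent to no `v m` with `m < k`.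
Hence a walk from `v i` to `v j` meets each of the `j - i - 1` edges with `i < k < j`, one after
the other, so it has length at least `j - i`; if the length is exactly `j - i`, the edge at
`i + 1` is met after one step, necessarily at `v (i + 1)`, and induction finishes the proof.
-/

namespace SimpleGraph

variable {α : Type*} {G : SimpleGraph α}

theorem Walk.exists_mem_support_eq_zero {f : α → ℤ} (hf : ∀ x y, G.Adj x y → 0 ≤ f x * f y)
    {x y : α} (p : G.Walk x y) (hx : f x < 0) (hy : 0 < f y) : ∃ u ∈ p.support, f u = 0 := by
  obtain ⟨d, hd, hd₁, hd₂⟩ := p.exists_boundary_dart {u | f u < 0} hx (by simpa using hy.le)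
  have := hf _ _ d.adj
  refine ⟨d.toProd.2, p.dart_snd_mem_support_of_mem_darts hd, ?_⟩
  simp only [Set.mem_ofPred_eq, not_lt] at hd₁ hd₂
  nlinarith

theorem exists_walk_length_eq_of_adj_succ (f : ℤ → α) (hf : ∀ m, G.Adj (f m) (f (m + 1)))
    (a : ℤ) : ∀ n : ℕ, ∃ p : G.Walk (f a) (f (a + n)), p.length = n
  | 0 => ⟨Walk.nil.copy rfl (by simp), by simp⟩
  | n + 1 => by
    obtain ⟨p, hp⟩ := exists_walk_length_eq_of_adj_succ f hf a n
    exact ⟨(p.concat (hf _)).copy rfl (by push_cast; ring_nf), by simp [hp]⟩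

theorem dist_le_natAbs_of_adj_succ (f : ℤ → α) (hf : ∀ m, G.Adj (f m) (f (m + 1))) (a b : ℤ) :
    G.dist (f a) (f b) ≤ (b - a).natAbs := by
  wlog hab : a ≤ b generalizing a b
  · rw [dist_comm, ← Int.natAbs_neg, neg_sub]
    exact this b a (by omega)
  obtain ⟨n, rfl⟩ : ∃ n : ℕ, b = a + n := ⟨(b - a).toNat, by omega⟩
  obtain ⟨p, hp⟩ := exists_walk_length_eq_of_adj_succ f hf a n
  simpa [hp] using dist_le p

/-- The zero set of `s k` plays the role of an edge through `v k` separating the earlier vertices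
of the path `v` (where `s k < 0`) from the later ones (where `s k > 0`). -/
structure PathSeparators (G : SimpleGraph α) (v : ℤ → α) (s : ℤ → α → ℤ) : Prop where
  mul_nonneg_of_adj : ∀ k x y, G.Adj x y → 0 ≤ s k x * s k y
  neg_of_lt : ∀ {m k}, m < k → s k (v m) < 0
  pos_of_lt : ∀ {k m}, k < m → 0 < s k (v m)
  eq_or_adj_of_eq_zero : ∀ {k u}, s k u = 0 → u = v k ∨ G.Adj (v k) u
  eq_of_adj_of_eq_zero : ∀ {m k u}, m < k → s k u = 0 → G.Adj (v m) u → u = v k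

namespace PathSeparators

variable {v : ℤ → α} {s : ℤ → α → ℤ}

theorem neg_of_eq_zero (hs : PathSeparators G v s) {k k' : ℤ} {u : α} (hk : k < k')
    (hu : s k u = 0) : s k' u < 0 := by
  rcases hs.eq_or_adj_of_eq_zero hu with rfl | hadj
  · exact hs.neg_of_lt hk
  have h₁ := hs.mul_nonneg_of_adj k' _ _ hadj
  have h₂ := hs.neg_of_lt hk
  refine lt_of_le_of_ne (by nlinarith) fun h₀ => ?_
  obtain rfl := hs.eq_of_adj_of_eq_zero hk h₀ hadj
  exact (hs.pos_of_lt hk).ne' hu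

theorem add_one_le_length (hs : PathSeparators G v s) {x y : α} (p : G.Walk x y) (hxy : x ≠ y)
    (a : ℤ) (n : ℕ) (hx : ∀ k, a ≤ k → k < a + n → s k x < 0)
    (hy : ∀ k, a ≤ k → k < a + n → 0 < s k y) : n + 1 ≤ p.length := by
  classical
  induction n generalizing x a with
  | zero => exact Nat.one_le_iff_ne_zero.mpr fun h => hxy (Walk.eq_of_length_eq_zero h)
  | succ n ih =>
    have hxa := hx a le_rfl (by omega)
    have hya := hy a le_rfl (by omega)
    obtain ⟨u, hu, hu₀⟩ := p.exists_mem_support_eq_zero (hs.mul_nonneg_of_adj a) hxa hya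
    have htake : (p.takeUntil u hu).length ≠ 0 := fun h => by
      rw [Walk.eq_of_length_eq_zero h] at hxa
      exact hxa.ne hu₀
    have hdrop := ih (p.dropUntil u hu) (by rintro rfl; exact hya.ne' hu₀) (a + 1)
      (fun k hk _ => hs.neg_of_eq_zero (by omega) hu₀) (fun k hk hk' => hy k (by omega) (by omega))
    rw [← p.take_spec hu, Walk.length_append]
    omega

theorem getVert_one_eq (hs : PathSeparators G v s) {i j : ℤ} (hij : i < j)
    (p : G.Walk (v i) (v j)) (hp : p.length = (j - i).toNat) : p.getVert 1 = v (i + 1) := by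
  classical
  rcases eq_or_lt_of_le (show i + 1 ≤ j by omega) with rfl | hij'
  · rw [show (i + 1 - i).toNat = 1 by omega] at hp
    rw [← hp, p.getVert_length]
  have hi := hs.neg_of_lt (lt_add_one i)
  obtain ⟨u, hu, hu₀⟩ := p.exists_mem_support_eq_zero (hs.mul_nonneg_of_adj (i + 1)) hi
    (hs.pos_of_lt hij')
  have hdrop := hs.add_one_le_length (p.dropUntil u hu)
    (by rintro rfl; exact (hs.pos_of_lt hij').ne' hu₀) (i + 2) (j - i - 2).toNat
    (fun k hk _ => hs.neg_of_eq_zero (by omega) hu₀) (fun k _ hk => hs.pos_of_lt (by omega))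
  have hsplit := congrArg Walk.length (p.take_spec hu)
  rw [Walk.length_append] at hsplit
  have htake : (p.takeUntil u hu).length = 1 := by
    have : (p.takeUntil u hu).length ≠ 0 := fun h => by
      rw [Walk.eq_of_length_eq_zero h] at hi
      exact hi.ne hu₀
    omega
  have hu' := hs.eq_of_adj_of_eq_zero (lt_add_one i) hu₀ (Walk.adj_of_length_eq_one htake)
  have := congrArg (Walk.getVert · 1) (p.take_spec hu)
  simp only [Walk.getVert_append, htake, lt_irrefl, if_false, Nat.sub_self,
    Walk.getVert_zero] at this
  rw [← this, hu']

theorem getVert_eq_of_length_eq (hs : PathSeparators G v s) (n : ℕ) :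
    ∀ (i : ℤ) (p : G.Walk (v i) (v (i + n))), p.length = n →
      ∀ k ≤ n, p.getVert k = v (i + k) := by
  induction n with
  | zero =>
    intro i p _ k hk
    obtain rfl : k = 0 := by omega
    simp
  | succ n ih =>
    intro i p hp k hk
    rcases k with _ | k
    · simp
    have h₁ : p.getVert 1 = v (i + 1) := hs.getVert_one_eq (by omega) p (by rw [hp]; omega)
    have hnil : ¬ p.Nil := by rw [← Walk.length_eq_zero_iff, hp]; omega
    have htail := Walk.length_tail_add_one hnil
    have := ih (i + 1) (p.tail.copy h₁ (by push_cast; ring_nf)) (by simp; omega) k (by omega)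
    rw [Walk.getVert_copy, Walk.getVert_tail] at this
    rw [this]
    push_cast
    ring_nf

end PathSeparators

end SimpleGraph

section Determinant

variable (x y z : Fin 2 → ℤ)

@[simp] lemma fareyDet_self : fareyDet x x = 0 := by simp [fareyDet, mul_comm]

lemma fareyDet_swap : fareyDet y x = -fareyDet x y := by simp only [fareyDet]; ring

lemma fareyDet_add_left : fareyDet (x + y) z = fareyDet x z + fareyDet y z := by
  simp only [fareyDet, Pi.add_apply]; ring

lemma fareyDet_add_right : fareyDet x (y + z) = fareyDet x y + fareyDet x z := by
  simp only [fareyDet, Pi.add_apply]; ring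

lemma fareyDet_smul_left (c : ℤ) : fareyDet (c • x) y = c * fareyDet x y := by
  simp only [fareyDet, Pi.smul_apply, smul_eq_mul]; ring

lemma fareyDet_smul_right (c : ℤ) : fareyDet x (c • y) = c * fareyDet x y := by
  simp only [fareyDet, Pi.smul_apply, smul_eq_mul]; ring

lemma fareyDet_smul_eq_add : fareyDet x y • z = fareyDet z y • x + fareyDet x z • y := by
  ext i; fin_cases i <;> simp [fareyDet] <;> ring

variable {x y z}

lemma eq_smul_add_smul_of_isUnit (hxy : IsUnit (fareyDet x y)) (hzy : IsUnit (fareyDet z y)) :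
    z = (fareyDet x y * fareyDet z y) • (x + (fareyDet z y * fareyDet x z) • y) := by
  have h := congrArg (fareyDet x y • ·) (fareyDet_smul_eq_add x y z)
  simp only [smul_smul, Int.isUnit_mul_self hxy, one_smul, smul_add] at h
  refine h.trans ?_
  rw [smul_add, smul_smul, mul_assoc (fareyDet x y), ← mul_assoc (fareyDet z y),
    Int.isUnit_mul_self hzy, one_mul]

lemma isCoprime_of_isUnit_fareyDet (h : IsUnit (fareyDet x y)) : IsCoprime (y 0) (y 1) := by
  rcases Int.isUnit_iff.1 h with h | h <;> simp only [fareyDet] at h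
  · exact ⟨-x 1, x 0, by linarith⟩
  · exact ⟨x 1, -x 0, by linarith⟩

lemma eq_or_eq_neg_of_fareyDet_eq_zero (hx : IsCoprime (x 0) (x 1)) (hy : IsCoprime (y 0) (y 1))
    (h : fareyDet x y = 0) : y = x ∨ y = -x := by
  simp only [fareyDet] at h
  obtain ⟨a, b, hab⟩ := hx
  set c := a * y 0 + b * y 1
  have h₀ : y 0 = c * x 0 := by linear_combination (-y 0) * hab - b * h
  have h₁ : y 1 = c * x 1 := by linear_combination (-y 1) * hab + a * h
  have hc : IsUnit c := hy.isUnit_of_dvd' ⟨x 0, h₀⟩ ⟨x 1, h₁⟩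
  rcases Int.isUnit_iff.1 hc with hc | hc <;> [left; right] <;> ext i <;> fin_cases i <;>
    simp [h₀, h₁, hc]

end Determinant

lemma two_le_abs_sub_of_mul_neg {a b : ℤ} (h : a * b < 0) : 2 ≤ |a - b| := by
  rcases mul_neg_iff.1 h with ⟨ha, hb⟩ | ⟨ha, hb⟩
  · rw [abs_of_pos (by omega)]; omega
  · rw [abs_of_neg (by omega)]; omega

lemma le_mul_of_le_units_smul {y z : Fin 2 → ℤ} {c : ℤˣ} (hy : 0 ≤ y) (h : y ≤ c • z) :
    y 0 * y 1 ≤ z 0 * z 1 := by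
  have hz : z 0 * z 1 = (c • z) 0 * (c • z) 1 := by
    simp only [Units.smul_def, Pi.smul_apply, smul_eq_mul]
    linear_combination (-(z 0 * z 1)) * Int.isUnit_mul_self c.isUnit
  rw [hz]
  exact mul_le_mul (h 0) (h 1) (hy 1) ((hy 0).trans (h 0))

lemma two_smul_le_units_smul {X Y Z : Fin 2 → ℤ} (hX : 0 ≤ X) (hXY : 2 • X ≤ Y) (α : ℤˣ)
    {β : ℤ} (hβ : 4 ≤ |β|) (hZ : Z = α • X + β • Y) : ∃ c : ℤˣ, 2 • Y ≤ c • Z := by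
  obtain ⟨c, hc⟩ : ∃ c : ℤˣ, (c : ℤ) * β = |β| := by
    rcases le_or_gt 0 β with h | h
    · exact ⟨1, by simp [abs_of_nonneg h]⟩
    · exact ⟨-1, by simp [abs_of_neg h]⟩
  refine ⟨c, fun i => ?_⟩
  have h₁ : 0 ≤ X i := hX i
  have h₂ : 2 * X i ≤ Y i := by simpa using hXY i
  have h₄ : 4 * Y i ≤ |β| * Y i := mul_le_mul_of_nonneg_right hβ (by omega)
  have key : (c • Z) i = (c * α : ℤˣ) * X i + |β| * Y i := by
    simp only [hZ, Units.smul_def, Pi.smul_apply, Pi.add_apply, smul_eq_mul, Units.val_mul, ← hc]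
    ring
  change (2 • Y) i ≤ (c • Z) i
  rw [key, Pi.smul_apply, nsmul_eq_mul, Nat.cast_ofNat]
  rcases Int.units_eq_one_or (c * α) with h | h <;> rw [h] <;> push_cast <;> omega

/-- Normalised by signs, the terms at least double at every step, since `4 y - x ≥ 2 y` whenever
`0 ≤ 2 x ≤ y`. -/
theorem exists_le_units_smul_of_turning (u : ℕ → Fin 2 → ℤ)
    (hunit : ∀ n, IsUnit (fareyDet (u n) (u (n + 1))))
    (hturn : ∀ n, 4 ≤ |fareyDet (u n) (u (n + 2))|) {x y : Fin 2 → ℤ} (hx : 0 ≤ x)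
    (hxy : 2 • x ≤ y) (a b : ℤˣ) (hu₀ : u 0 = a • x) (hu₁ : u 1 = b • y) (n : ℕ) :
    ∃ c : ℤˣ, y ≤ c • u (n + 1) := by
  suffices ∀ n, ∃ a b : ℤˣ, 0 ≤ a • u n ∧ 2 • (a • u n) ≤ b • u (n + 1) ∧ y ≤ b • u (n + 1) by
    obtain ⟨-, c, -, -, hc⟩ := this n
    exact ⟨c, hc⟩
  intro n
  induction n with
  | zero =>
    exact ⟨a⁻¹, b⁻¹, by rwa [hu₀, inv_smul_smul],
      by rwa [hu₀, hu₁, inv_smul_smul, inv_smul_smul], by rw [hu₁, inv_smul_smul]⟩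
  | succ n ih =>
    obtain ⟨a, b, hX, hXY, hY⟩ := ih
    have hY₀ : 0 ≤ b • u (n + 1) := (nsmul_nonneg hX 2).trans hXY
    obtain ⟨d, hd⟩ := hunit n
    obtain ⟨e, he⟩ : IsUnit (fareyDet (u (n + 2)) (u (n + 1))) := by
      rw [fareyDet_swap]; exact (hunit (n + 1)).neg
    have hrec : u (n + 2) = (d * e * a) • (a • u n) +
        ((d * b : ℤˣ) * fareyDet (u n) (u (n + 2))) • (b • u (n + 1)) := by
      have hcr := fareyDet_smul_eq_add (u n) (u (n + 1)) (u (n + 2))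
      rw [← hd, ← he] at hcr
      ext i
      have hi := congrFun hcr i
      have hd2 := Int.isUnit_mul_self d.isUnit
      have ha2 := Int.isUnit_mul_self a.isUnit
      have hb2 := Int.isUnit_mul_self b.isUnit
      simp only [Units.smul_def, Pi.smul_apply, Pi.add_apply, smul_eq_mul, Units.val_mul] at hi ⊢
      linear_combination (d : ℤ) * hi - u (n + 2) i * hd2 - (d * e * u n i : ℤ) * ha2 -
        (d * fareyDet (u n) (u (n + 2)) * u (n + 1) i : ℤ) * hb2
    obtain ⟨c, hc⟩ := two_smul_le_units_smul hX hXY _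
      (by rw [abs_mul, Int.isUnit_iff_abs_eq.1 (Units.isUnit _), one_mul]; exact hturn n) hrec
    refine ⟨b, c, hY₀, hc, hY.trans ((le_add_of_nonneg_left hY₀).trans ?_)⟩
    rwa [← two_nsmul]

namespace Farey

variable {x y P Q : Fin 2 → ℤ}

lemma fv_eq_fv_iff (hx : IsCoprime (x 0) (x 1)) (hy : IsCoprime (y 0) (y 1)) :
    fv x hx = fv y hy ↔ x = y ∨ x = -y :=
  Quotient.eq

lemma fv_eq_fv_iff_fareyDet_eq_zero (hx : IsCoprime (x 0) (x 1)) (hy : IsCoprime (y 0) (y 1)) :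
    fv x hx = fv y hy ↔ fareyDet x y = 0 := by
  rw [fv_eq_fv_iff]
  refine ⟨?_, fun h => (eq_or_eq_neg_of_fareyDet_eq_zero hy hx
    (by rw [fareyDet_swap, h, neg_zero])).imp id id⟩
  rintro (rfl | rfl) <;> simp [fareyDet_neg_left]

lemma fv_smul_of_isUnit {c : ℤ} (hc : IsUnit c) (hcx : IsCoprime ((c • x) 0) ((c • x) 1))
    (hx : IsCoprime (x 0) (x 1)) : fv (c • x) hcx = fv x hx := by
  rw [fv_eq_fv_iff]
  rcases Int.isUnit_iff.1 hc with rfl | rfl <;> simp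

lemma adj_fv_iff (hx : IsCoprime (x 0) (x 1)) (hy : IsCoprime (y 0) (y 1)) :
    Farey.Adj (fv x hx) (fv y hy) ↔ IsUnit (fareyDet x y) :=
  Int.isUnit_iff.symm

/-- The link of `B` is the path `m ↦ A + m • B`, and `C ≈ A + t • B` with `|t| = |det(A, C)|`. -/
theorem link_dist_le_natAbs_fareyDet {u x y : FareyVertex} {A B C : Fin 2 → ℤ}
    {hA : IsCoprime (A 0) (A 1)} {hB : IsCoprime (B 0) (B 1)} {hC : IsCoprime (C 0) (C 1)}
    (hu : u = fv B hB) (hx : x = fv A hA) (hy : y = fv C hC) (h₁ : x ∈ Farey.neighborSet u)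
    (h₂ : y ∈ Farey.neighborSet u) :
    (Farey.induce (Farey.neighborSet u)).dist ⟨x, h₁⟩ ⟨y, h₂⟩ ≤ (fareyDet A C).natAbs := by
  subst hu hx hy
  have hBA : IsUnit (fareyDet B A) := (adj_fv_iff hB hA).1 h₁
  have hAB : IsUnit (fareyDet A B) := by rw [fareyDet_swap]; exact hBA.neg
  have hCB : IsUnit (fareyDet C B) := by rw [fareyDet_swap]; exact ((adj_fv_iff hB hC).1 h₂).neg
  have hfan (m : ℤ) : IsUnit (fareyDet B (A + m • B)) := by
    rwa [fareyDet_add_right, fareyDet_smul_right, fareyDet_self, mul_zero, add_zero]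
  let f (m : ℤ) : Farey.neighborSet (fv B hB) :=
    ⟨fv (A + m • B) (isCoprime_of_isUnit_fareyDet (hfan m)), (adj_fv_iff hB _).2 (hfan m)⟩
  have hf (m : ℤ) : (Farey.induce (Farey.neighborSet (fv B hB))).Adj (f m) (f (m + 1)) := by
    rw [SimpleGraph.induce_adj]
    refine (adj_fv_iff _ _).2 ?_
    convert hAB using 1
    simp only [fareyDet_add_left, fareyDet_add_right, fareyDet_smul_left, fareyDet_smul_right,
      fareyDet_self, fareyDet_swap B A]
    ring
  have h₀ : (⟨fv A hA, h₁⟩ : Farey.neighborSet (fv B hB)) = f 0 :=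
    Subtype.ext ((fv_eq_fv_iff _ _).2 (Or.inl (by simp)))
  have ht : (⟨fv C hC, h₂⟩ : Farey.neighborSet (fv B hB)) = f (fareyDet C B * fareyDet A C) := by
    refine Subtype.ext ((fv_eq_fv_iff _ _).2 ?_)
    have hCt := eq_smul_add_smul_of_isUnit hAB hCB
    rcases Int.isUnit_iff.1 (hAB.mul hCB) with h | h <;> rw [h] at hCt
    · exact Or.inl (hCt.trans (one_smul _ _))
    · exact Or.inr (hCt.trans (neg_one_smul _ _))
  rw [h₀, ht]
  refine (SimpleGraph.dist_le_natAbs_of_adj_succ f hf 0 _).trans_eq ?_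
  rw [sub_zero, Int.natAbs_mul, Int.isUnit_iff_natAbs_eq.1 hCB, one_mul]

/-- Coordinates of `x` in the basis `(P, Q)`, up to the factor `det(P, Q)`. -/
def coords (P Q : Fin 2 → ℤ) : (Fin 2 → ℤ) →ₗ[ℤ] Fin 2 → ℤ where
  toFun x := ![fareyDet x Q, fareyDet P x]
  map_add' x y := by ext i; fin_cases i <;> simp [fareyDet_add_left, fareyDet_add_right]
  map_smul' c x := by ext i; fin_cases i <;> simp [fareyDet] <;> ring

lemma coords_apply : coords P Q x = ![fareyDet x Q, fareyDet P x] :=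
  rfl

lemma fareyDet_coords :
    fareyDet (coords P Q x) (coords P Q y) = fareyDet P Q * fareyDet x y := by
  simp only [coords_apply, fareyDet, Matrix.cons_val_zero, Matrix.cons_val_one]
  ring

lemma coords_smul_add_smul (a b : ℤ) : coords P Q (a • P + b • Q) = fareyDet P Q • ![a, b] := by
  ext i; fin_cases i <;> simp [coords, fareyDet] <;> ring

def side (P Q : Fin 2 → ℤ) : FareyVertex → ℤ :=
  Quotient.lift (fun x : PrimVec => coords P Q x.1 0 * coords P Q x.1 1) <| by
    rintro x y (h | h) <;> simp [coords, h, fareyDet_neg_left, fareyDet_neg_right]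

lemma side_fv (hx : IsCoprime (x 0) (x 1)) :
    side P Q (fv x hx) = coords P Q x 0 * coords P Q x 1 :=
  rfl

lemma side_neg_left (u : FareyVertex) : side (-P) Q u = -side P Q u := by
  induction u using Quotient.inductionOn
  simp [side, coords, fareyDet_neg_left]

/-- Farey edges do not cross. -/
lemma side_mul_side_nonneg_of_adj (hPQ : IsUnit (fareyDet P Q)) {u w : FareyVertex}
    (h : Farey.Adj u w) : 0 ≤ side P Q u * side P Q w := by
  induction u using Quotient.inductionOn with | h x => ?_
  induction w using Quotient.inductionOn with | h y => ?_
  have hxy : IsUnit (fareyDet x.1 y.1) := (adj_fv_iff x.2 y.2).1 h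
  have hdet : |fareyDet (coords P Q x.1) (coords P Q y.1)| = 1 := by
    rw [fareyDet_coords, ← Int.isUnit_iff_abs_eq]; exact hPQ.mul hxy
  by_contra hneg
  change ¬0 ≤ coords P Q x.1 0 * coords P Q x.1 1 * (coords P Q y.1 0 * coords P Q y.1 1) at hneg
  have := two_le_abs_sub_of_mul_neg (a := coords P Q x.1 0 * coords P Q y.1 1)
    (b := coords P Q x.1 1 * coords P Q y.1 0) (by linarith)
  simp only [fareyDet] at hdet
  omega

lemma side_eq_zero_iff (hP : IsCoprime (P 0) (P 1)) (hQ : IsCoprime (Q 0) (Q 1))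
    {u : FareyVertex} : side P Q u = 0 ↔ u = fv P hP ∨ u = fv Q hQ := by
  induction u using Quotient.inductionOn with | h x => ?_
  change coords P Q x.1 0 * coords P Q x.1 1 = 0 ↔ fv x.1 x.2 = _ ∨ fv x.1 x.2 = _
  rw [fv_eq_fv_iff_fareyDet_eq_zero, fv_eq_fv_iff_fareyDet_eq_zero, fareyDet_swap, neg_eq_zero,
    mul_eq_zero, or_comm]
  rfl

/-- `|det(V (m - 1), V (m + 1))|` is the absolute turning number at `m` of the Farey path
`m ↦ [V m]`. -/
structure TurningAtLeastFour (V : ℤ → Fin 2 → ℤ) : Prop where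
  isUnit_fareyDet : ∀ m, IsUnit (fareyDet (V m) (V (m + 1)))
  four_le_abs_fareyDet : ∀ m, 4 ≤ |fareyDet (V (m - 1)) (V (m + 1))|

/-- The sign is chosen so that `V (k + 1) = ± ((|t| - 2) • orientedRep V k + fanVertex V k)`,
where `t` is the turning number at `k`. -/
def orientedRep (V : ℤ → Fin 2 → ℤ) (k : ℤ) : Fin 2 → ℤ :=
  (fareyDet (V (k + 1)) (V k) * Int.sign (fareyDet (V (k - 1)) (V (k + 1)))) • V k

/-- The vertex two steps from `V (k - 1)` along the link of `V k`, towards `V (k + 1)`. -/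
def fanVertex (V : ℤ → Fin 2 → ℤ) (k : ℤ) : Fin 2 → ℤ :=
  V (k - 1) + (2 : ℤ) • orientedRep V k

def separator (V : ℤ → Fin 2 → ℤ) (k : ℤ) : FareyVertex → ℤ :=
  side (orientedRep V k) (fanVertex V k)

namespace TurningAtLeastFour

variable {V : ℤ → Fin 2 → ℤ} {k m : ℤ}

theorem exists_le_units_smul_coords (hV : TurningAtLeastFour V) {s : ℤ} (hs : s = 1 ∨ s = -1)
    (hPQ : IsUnit (fareyDet P Q)) (hx : 0 ≤ x) (hxy : 2 • x ≤ y) (k : ℤ) (a b : ℤˣ)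
    (ha : coords P Q (V k) = a • x) (hb : coords P Q (V (k + s)) = b • y) (n : ℕ) :
    ∃ c : ℤˣ, y ≤ c • coords P Q (V (k + s * (n + 1))) := by
  have hδ (x y : Fin 2 → ℤ) : |fareyDet (coords P Q x) (coords P Q y)| = |fareyDet x y| := by
    rw [fareyDet_coords, abs_mul, Int.isUnit_iff_abs_eq.1 hPQ, one_mul]
  have key := exists_le_units_smul_of_turning (fun n : ℕ => coords P Q (V (k + s * n))) ?_ ?_ hx
    hxy a b (by simpa using ha) (by simpa using hb) n
  · simpa using key
  all_goals intro n; simp only [Int.isUnit_iff_abs_eq, hδ]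
  · rcases hs with rfl | rfl
    · simpa [add_assoc] using Int.isUnit_iff_abs_eq.1 (hV.isUnit_fareyDet (k + n))
    · rw [fareyDet_swap, abs_neg]
      convert Int.isUnit_iff_abs_eq.1 (hV.isUnit_fareyDet (k - n - 1)) using 4 <;> push_cast <;>
        ring
  · rcases hs with rfl | rfl
    · convert hV.four_le_abs_fareyDet (k + n + 1) using 4 <;> push_cast <;> ring
    · rw [fareyDet_swap, abs_neg]
      convert hV.four_le_abs_fareyDet (k - n - 1) using 4 <;> push_cast <;> ring

lemma isUnit_fareyDet_sub_one (hV : TurningAtLeastFour V) (k : ℤ) :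
    IsUnit (fareyDet (V (k - 1)) (V k)) := by
  simpa using hV.isUnit_fareyDet (k - 1)

lemma isUnit_fareyDet_self_sub_one (hV : TurningAtLeastFour V) (k : ℤ) :
    IsUnit (fareyDet (V k) (V (k - 1))) := by
  rw [fareyDet_swap]; exact (hV.isUnit_fareyDet_sub_one k).neg

lemma isUnit_orientation (hV : TurningAtLeastFour V) (k : ℤ) :
    IsUnit (fareyDet (V (k + 1)) (V k) * Int.sign (fareyDet (V (k - 1)) (V (k + 1)))) := by
  refine IsUnit.mul (by rw [fareyDet_swap]; exact (hV.isUnit_fareyDet k).neg) ?_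
  have := hV.four_le_abs_fareyDet k
  rcases lt_trichotomy (fareyDet (V (k - 1)) (V (k + 1))) 0 with h | h | h
  · rw [Int.sign_eq_neg_one_of_neg h]; exact isUnit_one.neg
  · rw [h] at this; simp at this
  · rw [Int.sign_eq_one_of_pos h]; exact isUnit_one

lemma isUnit_fareyDet_orientedRep_fanVertex (hV : TurningAtLeastFour V) (k : ℤ) :
    IsUnit (fareyDet (orientedRep V k) (fanVertex V k)) := by
  convert (hV.isUnit_orientation k).mul (hV.isUnit_fareyDet_self_sub_one k) using 1
  simp only [orientedRep, fanVertex, fareyDet_smul_left, fareyDet_add_right, fareyDet_smul_right,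
    fareyDet_self]
  ring

lemma isCoprime_orientedRep (hV : TurningAtLeastFour V) (k : ℤ) :
    IsCoprime (orientedRep V k 0) (orientedRep V k 1) :=
  isCoprime_of_isUnit_fareyDet (x := fanVertex V k) <| by
    rw [fareyDet_swap]; exact (hV.isUnit_fareyDet_orientedRep_fanVertex k).neg

lemma isCoprime_fanVertex (hV : TurningAtLeastFour V) (k : ℤ) :
    IsCoprime (fanVertex V k 0) (fanVertex V k 1) :=
  isCoprime_of_isUnit_fareyDet (hV.isUnit_fareyDet_orientedRep_fanVertex k)

lemma fv_orientedRep (hV : TurningAtLeastFour V) (k : ℤ) (hk : IsCoprime (V k 0) (V k 1)) :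
    fv (orientedRep V k) (hV.isCoprime_orientedRep k) = fv (V k) hk :=
  fv_smul_of_isUnit (hV.isUnit_orientation k) _ hk

lemma coords_self (hP : P = orientedRep V k ∨ P = -orientedRep V k) :
    coords P (fanVertex V k) (V k) = fareyDet (V k) (V (k - 1)) • ![1, 0] := by
  have h₀ : fareyDet (V k) (fanVertex V k) = fareyDet (V k) (V (k - 1)) := by
    simp only [fanVertex, orientedRep, fareyDet_add_right, fareyDet_smul_right, fareyDet_self,
      mul_zero, add_zero]
  have h₁ : fareyDet P (V k) = 0 := by
    rcases hP with rfl | rfl <;>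
      simp only [orientedRep, fareyDet_neg_left, fareyDet_smul_left, fareyDet_self, mul_zero,
        neg_zero]
  rw [coords_apply, h₀, h₁]
  ext i; fin_cases i <;> simp

theorem exists_le_units_smul_coords_of_lt (hV : TurningAtLeastFour V) (hkm : k < m) :
    ∃ c : ℤˣ, ![1, 1] ≤ c • coords (orientedRep V k) (fanVertex V k) (V m) := by
  have hf := hV.four_le_abs_fareyDet k
  set f := fareyDet (V (k - 1)) (V (k + 1))
  have hPW := hV.isUnit_fareyDet_orientedRep_fanVertex k
  have hd := hV.isUnit_fareyDet_sub_one k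
  have he : IsUnit (fareyDet (V (k + 1)) (V k)) := by
    rw [fareyDet_swap]; exact (hV.isUnit_fareyDet k).neg
  have hW : V (k - 1) + (fareyDet (V (k + 1)) (V k) * f) • V k =
      (|f| - 2) • orientedRep V k + (1 : ℤ) • fanVertex V k := by
    ext i
    simp only [fanVertex, orientedRep, Pi.add_apply, Pi.smul_apply, smul_eq_mul]
    linear_combination (-(fareyDet (V (k + 1)) (V k) * V k i)) * Int.sign_mul_abs f
  have hb : coords (orientedRep V k) (fanVertex V k) (V (k + 1)) =
      (fareyDet (V (k - 1)) (V k) * fareyDet (V (k + 1)) (V k) *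
        fareyDet (orientedRep V k) (fanVertex V k)) • ![|f| - 2, 1] := by
    have hC := eq_smul_add_smul_of_isUnit hd he
    rw [hW] at hC
    conv_lhs => rw [hC]
    rw [map_smul, coords_smul_add_smul, smul_smul]
  obtain ⟨c, hc⟩ := hV.exists_le_units_smul_coords (Or.inl rfl) hPW (x := ![1, 0])
    (y := ![|f| - 2, 1]) (by intro i; fin_cases i <;> simp)
    (by intro i; fin_cases i <;> simp; omega) k (hV.isUnit_fareyDet_self_sub_one k).unit
    ((hd.mul he).mul hPW).unit (by rw [coords_self (Or.inl rfl), Units.smul_def, IsUnit.unit_spec])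
    (by rw [hb, Units.smul_def, IsUnit.unit_spec]) (m - k - 1).toNat
  have hc' : ![|f| - 2, 1] ≤ c • coords (orientedRep V k) (fanVertex V k) (V m) := by
    convert hc using 4; omega
  refine ⟨c, le_trans (fun i => ?_) hc'⟩
  fin_cases i <;> simp; omega

theorem exists_le_units_smul_coords_of_gt (hV : TurningAtLeastFour V) (hmk : m < k) :
    ∃ c : ℤˣ, ![2, 1] ≤ c • coords (-orientedRep V k) (fanVertex V k) (V m) := by
  have hPW : IsUnit (fareyDet (-orientedRep V k) (fanVertex V k)) := by
    rw [fareyDet_neg_left]; exact (hV.isUnit_fareyDet_orientedRep_fanVertex k).neg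
  have hb : coords (-orientedRep V k) (fanVertex V k) (V (k + -1)) =
      fareyDet (-orientedRep V k) (fanVertex V k) • ![2, 1] := by
    rw [← coords_smul_add_smul]
    congr 1
    simp only [fanVertex, smul_neg, one_smul]
    abel_nf
  obtain ⟨c, hc⟩ := hV.exists_le_units_smul_coords (Or.inr rfl) hPW (x := ![1, 0]) (y := ![2, 1])
    (by intro i; fin_cases i <;> simp) (by intro i; fin_cases i <;> simp) k
    (hV.isUnit_fareyDet_self_sub_one k).unit hPW.unit
    (by rw [coords_self (Or.inr rfl), Units.smul_def, IsUnit.unit_spec])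
    (by rw [hb, Units.smul_def, IsUnit.unit_spec]) (k - m - 1).toNat
  exact ⟨c, by convert hc using 4; omega⟩

theorem pathSeparators (hV : TurningAtLeastFour V) {v : ℤ → FareyVertex}
    (hprim : ∀ m, IsCoprime (V m 0) (V m 1)) (hv : ∀ m, v m = fv (V m) (hprim m)) :
    SimpleGraph.PathSeparators Farey v (separator V) where
  mul_nonneg_of_adj k _ _ :=
    side_mul_side_nonneg_of_adj (hV.isUnit_fareyDet_orientedRep_fanVertex k)
  neg_of_lt {m k} hmk := by
    obtain ⟨c, hc⟩ := hV.exists_le_units_smul_coords_of_gt hmk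
    have := le_mul_of_le_units_smul (by intro i; fin_cases i <;> simp) hc
    rw [hv m, separator, ← neg_neg (orientedRep V k), side_neg_left, side_fv]
    simp only [Matrix.cons_val_zero, Matrix.cons_val_one] at this
    omega
  pos_of_lt {k m} hkm := by
    obtain ⟨c, hc⟩ := hV.exists_le_units_smul_coords_of_lt hkm
    have := le_mul_of_le_units_smul (by intro i; fin_cases i <;> simp) hc
    rw [hv m, separator, side_fv]
    simp only [Matrix.cons_val_zero, Matrix.cons_val_one] at this
    omega
  eq_or_adj_of_eq_zero {k u} hu := by
    rw [separator, side_eq_zero_iff (hV.isCoprime_orientedRep k) (hV.isCoprime_fanVertex k),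
      hV.fv_orientedRep k (hprim k), ← hv k] at hu
    refine hu.imp id fun hu => ?_
    rw [hu, hv k, ← hV.fv_orientedRep k (hprim k), adj_fv_iff]
    exact hV.isUnit_fareyDet_orientedRep_fanVertex k
  eq_of_adj_of_eq_zero {m k u} hmk hu hadj := by
    rw [separator, side_eq_zero_iff (hV.isCoprime_orientedRep k) (hV.isCoprime_fanVertex k),
      hV.fv_orientedRep k (hprim k), ← hv k] at hu
    refine hu.resolve_right fun hu => ?_
    rw [hu, hv m, adj_fv_iff, Int.isUnit_iff_abs_eq] at hadj
    obtain ⟨c, hc⟩ := hV.exists_le_units_smul_coords_of_gt hmk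
    have h₀ := hc 0
    simp only [Matrix.cons_val_zero, Units.smul_def, Pi.smul_apply, smul_eq_mul, coords_apply] at h₀
    rw [abs_eq (by norm_num)] at hadj
    rcases Int.units_eq_one_or c with rfl | rfl <;> push_cast at h₀ <;> omega

end TurningAtLeastFour

end Farey

theorem farey_unique_geodesic_of_turning_ge_four_general (v : ℤ → FareyVertex)
    (hadj : ∀ i : ℤ, Farey.Adj (v i) (v (i + 1)))
    (hturn : ∀ i : ℤ, ∀ h₁ : v (i - 1) ∈ Farey.neighborSet (v i),
      ∀ h₂ : v (i + 1) ∈ Farey.neighborSet (v i),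
      4 ≤ (Farey.induce (Farey.neighborSet (v i))).dist ⟨v (i - 1), h₁⟩ ⟨v (i + 1), h₂⟩) :
    ∀ i j : ℤ, i < j → ∀ p : Farey.Walk (v i) (v j),
      p.length = (j - i).toNat → ∀ k : ℕ, k ≤ p.length → p.getVert k = v (i + k) := by
  set V : ℤ → Fin 2 → ℤ := fun m => (v m).out.1
  have hprim (m : ℤ) : IsCoprime (V m 0) (V m 1) := (v m).out.2
  have hv (m : ℤ) : v m = fv (V m) (hprim m) := (Quotient.out_eq _).symm
  have hV : Farey.TurningAtLeastFour V := by
    refine ⟨fun m => ?_, fun m => ?_⟩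
    · simpa only [hv, Farey.adj_fv_iff] using hadj m
    · have h₁ : v (m - 1) ∈ Farey.neighborSet (v m) := by simpa using (hadj (m - 1)).symm
      have h₂ : v (m + 1) ∈ Farey.neighborSet (v m) := hadj m
      have := (hturn m h₁ h₂).trans
        (Farey.link_dist_le_natAbs_fareyDet (hv m) (hv (m - 1)) (hv (m + 1)) h₁ h₂)
      rw [Int.abs_eq_natAbs]
      exact_mod_cast this
  intro i j hij p hp k hk
  obtain ⟨n, rfl⟩ : ∃ n : ℕ, j = i + n := ⟨(j - i).toNat, by omega⟩
  exact (hV.pathSeparators hprim hv).getVert_eq_of_length_eq n i p (by rw [hp]; omega) k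
    (by omega)

theorem farey_unique_geodesic_of_turning_ge_four (v : ℤ → FareyVertex)
    (hadj : ∀ i : ℤ, Farey.Adj (v i) (v (i + 1)))
    (hne : ∀ i : ℤ, v (i - 1) ≠ v (i + 1))
    (hturn : ∀ i : ℤ, ∀ h₁ : v (i - 1) ∈ Farey.neighborSet (v i),
      ∀ h₂ : v (i + 1) ∈ Farey.neighborSet (v i),
      4 ≤ (Farey.induce (Farey.neighborSet (v i))).dist ⟨v (i - 1), h₁⟩ ⟨v (i + 1), h₂⟩) :
    ∀ i j : ℤ, i < j → ∀ p : Farey.Walk (v i) (v j),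
      p.length = (j - i).toNat → ∀ k : ℕ, k ≤ p.length → p.getVert k = v (i + k) :=
  farey_unique_geodesic_of_turning_ge_four_general v hadj hturn
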